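/- Under the setting of the previous statement, for all 0 ≤ λ ≤ K, E[exp(λ(δ - ε))] ≤ exp((λ^2/2)·(4z/K^2 + 2ε/K)), i.e., δ - ε is (4z/K^2 + 2ε/K, K)-sub-Gaussian. -/

import Mathlib

/-!
With `t = λ / K`, the centred moment generating function is
`e^{-λε} (1 + z (e^t + e^{-t} - 2) + (Kε/2) (e^t - e^{-t}))`. For `|t| ≤ 1` one has
`|e^{±t} - 1 ∓ t| ≤ t²`, so the bracket is at most `exp (2zt² + Kεt + Kεt²)`, and the linear
term `Kεt = λε` cancels the centring factor `e^{-λε}`.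
-/

open MeasureTheory ProbabilityTheory

theorem integral_comp_eq_sum_of_forall_mem {Ω α E : Type*} [MeasurableSpace Ω]
    [MeasurableSpace α] [MeasurableSingletonClass α] [NormedAddCommGroup E] [NormedSpace ℝ E]
    [CompleteSpace E] {μ : Measure Ω} [IsFiniteMeasure μ] {X : Ω → α} (hX : Measurable X)
    {s : Finset α} (hs : ∀ ω, X ω ∈ s) (g : α → E) :
    ∫ ω, g (X ω) ∂μ = ∑ x ∈ s, μ.real {ω | X ω = x} • g x := by
  have hmeas (x : α) : MeasurableSet {ω | X ω = x} := hX (measurableSet_singleton x)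
  have hsplit : (fun ω ↦ g (X ω)) = fun ω ↦ ∑ x ∈ s, {ω | X ω = x}.indicator (fun _ ↦ g x) ω := by
    funext ω
    rw [Finset.sum_eq_single_of_mem (X ω) (hs ω)]
    · simp
    · intro x _ hx
      exact Set.indicator_of_notMem (Ne.symm hx) _
  rw [hsplit, integral_finsetSum _ fun x _ ↦ (integrable_const (g x)).indicator (hmeas x)]
  simp only [integral_indicator_const _ (hmeas _)]

theorem integral_comp_eq_of_three_valued {Ω α : Type*} [MeasurableSpace Ω] [MeasurableSpace α]
    [MeasurableSingletonClass α] {μ : Measure Ω} [IsProbabilityMeasure μ] {X : Ω → α}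
    (hX : Measurable X) {a b c : α} (hab : a ≠ b) (hac : a ≠ c) (hbc : b ≠ c)
    (hvals : ∀ ω, X ω = a ∨ X ω = b ∨ X ω = c) (g : α → ℝ) :
    ∫ ω, g (X ω) ∂μ = μ.real {ω | X ω = a} * g a + μ.real {ω | X ω = b} * g b
      + (1 - μ.real {ω | X ω = a} - μ.real {ω | X ω = b}) * g c := by
  classical
  have hsupp : ∀ ω, X ω ∈ ({a, b, c} : Finset α) := by simpa using hvals
  have hexpand (f : α → ℝ) : ∫ ω, f (X ω) ∂μ = μ.real {ω | X ω = a} * f a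
      + μ.real {ω | X ω = b} * f b + μ.real {ω | X ω = c} * f c := by
    rw [integral_comp_eq_sum_of_forall_mem hX hsupp, Finset.sum_insert (by simp [hab, hac]),
      Finset.sum_pair hbc]
    simp only [smul_eq_mul]; ring
  have htotal := hexpand fun _ ↦ 1
  simp only [integral_const, probReal_univ, smul_eq_mul, mul_one] at htotal
  rw [hexpand g]
  congr 2
  linarith

theorem three_point_mgf_le {z b t : ℝ} (hz : 0 ≤ z) (hb : 0 ≤ b) (ht : |t| ≤ 1) :
    (z + b) * Real.exp t + (z - b) * Real.exp (-t) + (1 - 2 * z)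
      ≤ Real.exp (2 * z * t ^ 2 + 2 * b * t + 2 * b * t ^ 2) := by
  obtain ⟨-, hpos⟩ := abs_le.1 (Real.abs_exp_sub_one_sub_id_le ht)
  obtain ⟨hneg₁, hneg₂⟩ := abs_le.1 (Real.abs_exp_sub_one_sub_id_le (x := -t) (by rwa [abs_neg]))
  rw [neg_sq] at hneg₁ hneg₂
  have hcosh : Real.exp t + Real.exp (-t) - 2 ≤ 2 * t ^ 2 := by linarith
  have hsinh : Real.exp t - Real.exp (-t) ≤ 2 * t + 2 * t ^ 2 := by linarith
  calc (z + b) * Real.exp t + (z - b) * Real.exp (-t) + (1 - 2 * z)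
      = z * (Real.exp t + Real.exp (-t) - 2) + b * (Real.exp t - Real.exp (-t)) + 1 := by ring
    _ ≤ z * (2 * t ^ 2) + b * (2 * t + 2 * t ^ 2) + 1 := by gcongr
    _ = 2 * z * t ^ 2 + 2 * b * t + 2 * b * t ^ 2 + 1 := by ring
    _ ≤ _ := Real.add_one_le_exp _

theorem three_point_centered_mgf_le {K z ε lam : ℝ} (hK : 0 < K) (hz : 0 ≤ z) (hε : 0 ≤ ε)
    (hlam : |lam| ≤ K) :
    (z + K * ε / 2) * Real.exp (lam * (1 / K - ε))
      + (z - K * ε / 2) * Real.exp (lam * (-(1 / K) - ε))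
      + (1 - 2 * z) * Real.exp (lam * (0 - ε))
      ≤ Real.exp (lam ^ 2 / 2 * (4 * z / K ^ 2 + 2 * ε / K)) := by
  have ht : |lam / K| ≤ 1 := by rwa [abs_div, abs_of_pos hK, div_le_one hK]
  have hshift (x : ℝ) : Real.exp (lam * (x - ε)) = Real.exp (lam * x) * Real.exp (-(lam * ε)) := by
    rw [← Real.exp_add]; ring_nf
  calc (z + K * ε / 2) * Real.exp (lam * (1 / K - ε))
        + (z - K * ε / 2) * Real.exp (lam * (-(1 / K) - ε))
        + (1 - 2 * z) * Real.exp (lam * (0 - ε))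
      = ((z + K * ε / 2) * Real.exp (lam / K) + (z - K * ε / 2) * Real.exp (-(lam / K))
          + (1 - 2 * z)) * Real.exp (-(lam * ε)) := by
        simp only [hshift, mul_zero, Real.exp_zero, mul_neg, mul_one_div]; ring
    _ ≤ Real.exp (2 * z * (lam / K) ^ 2 + 2 * (K * ε / 2) * (lam / K)
          + 2 * (K * ε / 2) * (lam / K) ^ 2) * Real.exp (-(lam * ε)) := by
        gcongr
        exact three_point_mgf_le hz (by positivity) ht
    _ = Real.exp (lam ^ 2 / 2 * (4 * z / K ^ 2 + 2 * ε / K)) := by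
        rw [← Real.exp_add]; congr 1; field_simp; ring

/-- For the three-point random variable `δ` as before
(`z ∈ (0,1/4]`, `K ≥ 1`, `0 ≤ ε ≤ 2z/K`), the centered variable `δ - ε` is
`(4z/K² + 2ε/K, K)`-sub-Gaussian: for all `0 ≤ λ ≤ K`,
`E[exp(λ(δ - ε))] ≤ exp((λ²/2)·(4z/K² + 2ε/K))`. -/
theorem subgaussian_three_point {Ω : Type*} [MeasureSpace Ω]
    [IsProbabilityMeasure (ℙ : Measure Ω)]
    (K z ε : ℝ) (hz : z ∈ Set.Ioc (0 : ℝ) (1 / 4)) (hK : 1 ≤ K)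
    (hε0 : 0 ≤ ε) (hε1 : ε ≤ 2 * z / K)
    (δ : Ω → ℝ) (hmeas : Measurable δ)
    (hplus : (ℙ : Measure Ω) {ω : Ω | δ ω = 1 / K}
      = ENNReal.ofReal (z * (1 + K * ε / (2 * z))))
    (hminus : (ℙ : Measure Ω) {ω : Ω | δ ω = -(1 / K)}
      = ENNReal.ofReal (z * (1 - K * ε / (2 * z))))
    (hvals : ∀ ω : Ω, δ ω = 1 / K ∨ δ ω = -(1 / K) ∨ δ ω = 0) :
    ∀ lam : ℝ, 0 ≤ lam → lam ≤ K →
      ∫ ω, Real.exp (lam * (δ ω - ε)) ∂(ℙ : Measure Ω)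
        ≤ Real.exp (lam ^ 2 / 2 * (4 * z / K ^ 2 + 2 * ε / K)) := by
  intro lam hlam₀ hlamK
  obtain ⟨hz₀, -⟩ := hz
  have hK₀ : 0 < K := one_pos.trans_le hK
  have hKε : K * ε ≤ 2 * z := by rwa [le_div_iff₀ hK₀, mul_comm] at hε1
  have hplus' : (ℙ : Measure Ω).real {ω | δ ω = 1 / K} = z + K * ε / 2 := by
    have hmass : z * (1 + K * ε / (2 * z)) = z + K * ε / 2 := by field_simp [hz₀.ne']
    rw [measureReal_def, hplus, hmass, ENNReal.toReal_ofReal (by positivity)]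
  have hminus' : (ℙ : Measure Ω).real {ω | δ ω = -(1 / K)} = z - K * ε / 2 := by
    have hmass : z * (1 - K * ε / (2 * z)) = z - K * ε / 2 := by field_simp [hz₀.ne']
    rw [measureReal_def, hminus, hmass, ENNReal.toReal_ofReal (by linarith)]
  have hpos : 0 < 1 / K := by positivity
  rw [integral_comp_eq_of_three_valued (g := fun x ↦ Real.exp (lam * (x - ε))) hmeas
    (neg_lt_self hpos).ne' hpos.ne' (neg_ne_zero.2 hpos.ne') hvals, hplus', hminus']
  convert three_point_centered_mgf_le hK₀ hz₀.le hε0 (by rwa [abs_of_nonneg hlam₀]) using 3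
  ring
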